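/- arXiv:2305.18799 — 11 statements merged into one kernel-verified Lean document; each statement's English description precedes it below -/
import Mathlib

section
/- Let p be a prime, K = ZMod p, and let α, β ∈ K be nonzero. Let C be a 2×2 matrix over K with determinant 1 whose (1,1) entry a is nonzero. Then for any natural numbers n₁, m₁, n₂, m₂ there exist natural numbers m̃₁, ñ₁, m̃₂, ñ₂ such that A₁^{n₁} · C · A₀^{m₁ + m̃₁} · A₁^{ñ₁} = A₁^{n₂} · C · A₀^{m₂ + m̃₂} · A₁^{ñ₂} = [[a, 0],[0, a⁻¹]]; in other words, the two extended products are equal and diagonal, yielding a collision of the generalized Zémor hash function. -/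
/-!
Left multiplication by a power of `A₁` only adds a multiple of the first row to the second, so
`M = A₁ ^ n * C` still has determinant `1` and top-left entry `a`. Right multiplication by an
upper unitriangular matrix can then clear the top-right entry of `M`, after which the
determinant forces the bottom-right entry to be `a⁻¹`, and a lower unitriangular factor clears
the bottom-left entry. Over `ZMod p` every unitriangular matrix with the required entry is a
power of the corresponding generator (with exponent at least `m`), as `α, β ≠ 0` and every
element is the cast of a natural number.
-/

open Matrix

section Unitriangular

variable {R : Type*} [Semiring R]

theorem upperUnitriangular_pow (α : R) (k : ℕ) :
    !![1, α; 0, 1] ^ k = !![1, (k : R) * α; 0, 1] := by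
  induction k with
  | zero => simp [one_fin_two]
  | succ k ih =>
    rw [pow_succ', ih, mul_fin_two]
    simp [add_mul]

theorem lowerUnitriangular_pow (β : R) (k : ℕ) :
    !![1, 0; β, 1] ^ k = !![1, 0; (k : R) * β, 1] := by
  induction k with
  | zero => simp [one_fin_two]
  | succ k ih =>
    rw [pow_succ, ih, mul_fin_two]
    simp [add_mul]

end Unitriangular

section Field

variable {K : Type*} [Field K]

theorem mul_upperUnitriangular_mul_lowerUnitriangular_eq_diagonal {a b c d : K}
    (hdet : a * d - b * c = 1) (ha : a ≠ 0) :
    !![a, b; c, d] * !![1, -b / a; 0, 1] * !![1, 0; -(a * c), 1] = !![a, 0; 0, a⁻¹] := by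
  obtain rfl : d = (1 + b * c) / a := by
    field_simp
    linear_combination hdet
  rw [mul_fin_two, mul_fin_two]
  ext i j
  fin_cases i <;> fin_cases j <;> dsimp <;> field_simp <;> ring

theorem lowerUnitriangular_pow_mul_apply_zero_zero (β : K) (n : ℕ) (C : Matrix (Fin 2) (Fin 2) K) :
    (!![1, 0; β, 1] ^ n * C) 0 0 = C 0 0 := by
  simp [lowerUnitriangular_pow, mul_apply, Fin.sum_univ_two]

theorem det_lowerUnitriangular_pow_mul (β : K) (n : ℕ) (C : Matrix (Fin 2) (Fin 2) K) :
    (!![1, 0; β, 1] ^ n * C).det = C.det := by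
  rw [det_mul, det_pow, det_fin_two_of]
  simp

theorem exists_natCast_add_mul_eq (hK : Function.Surjective (Nat.cast : ℕ → K))
    {α : K} (hα : α ≠ 0) (m : ℕ) (x : K) : ∃ k : ℕ, ((m + k : ℕ) : K) * α = x := by
  obtain ⟨k, hk⟩ := hK (x / α - m)
  exact ⟨k, by push_cast [hk]; field_simp; ring⟩

theorem exists_natCast_mul_eq (hK : Function.Surjective (Nat.cast : ℕ → K))
    {β : K} (hβ : β ≠ 0) (x : K) : ∃ k : ℕ, (k : K) * β = x := by
  simpa using exists_natCast_add_mul_eq hK hβ 0 x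

theorem exists_lowerUnitriangular_pow_mul_mul_pow_eq_diagonal
    (hK : Function.Surjective (Nat.cast : ℕ → K)) {α β : K} (hα : α ≠ 0) (hβ : β ≠ 0)
    (C : Matrix (Fin 2) (Fin 2) K) (hdet : C.det = 1) (ha : C 0 0 ≠ 0) (n m : ℕ) :
    ∃ mt nt : ℕ,
      !![1, 0; β, 1] ^ n * C * !![1, α; 0, 1] ^ (m + mt) * !![1, 0; β, 1] ^ nt =
        !![C 0 0, 0; 0, (C 0 0)⁻¹] := by
  set M := !![1, 0; β, 1] ^ n * C
  have hM₀₀ : M 0 0 = C 0 0 := lowerUnitriangular_pow_mul_apply_zero_zero β n C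
  have hMdet : M.det = 1 := (det_lowerUnitriangular_pow_mul β n C).trans hdet
  obtain ⟨mt, hmt⟩ := exists_natCast_add_mul_eq hK hα m (-M 0 1 / M 0 0)
  obtain ⟨nt, hnt⟩ := exists_natCast_mul_eq hK hβ (-(M 0 0 * M 1 0))
  refine ⟨mt, nt, ?_⟩
  rw [upperUnitriangular_pow, lowerUnitriangular_pow, hmt, hnt, ← hM₀₀]
  rw [eta_fin_two M] at hMdet ⊢
  rw [det_fin_two_of] at hMdet
  exact mul_upperUnitriangular_mul_lowerUnitriangular_eq_diagonal hMdet (hM₀₀ ▸ ha)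

end Field

/-- Generating collisions of the generalized Zémor hash function by
extending a message on both sides to a fixed diagonal matrix.
`A₀ = !![1, α; 0, 1]`, `A₁ = !![1, 0; β, 1]` are the generalized Zémor generators. -/
theorem zemor_collision (p : ℕ) [Fact p.Prime] (α β : ZMod p)
    (hα : α ≠ 0) (hβ : β ≠ 0)
    (C : Matrix (Fin 2) (Fin 2) (ZMod p)) (hdet : C.det = 1) (ha : C 0 0 ≠ 0)
    (n₁ m₁ n₂ m₂ : ℕ) :
    ∃ mt₁ nt₁ mt₂ nt₂ : ℕ,
      (!![1, 0; β, 1] : Matrix (Fin 2) (Fin 2) (ZMod p)) ^ n₁ * C *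
          (!![1, α; 0, 1] : Matrix (Fin 2) (Fin 2) (ZMod p)) ^ (m₁ + mt₁) *
          (!![1, 0; β, 1] : Matrix (Fin 2) (Fin 2) (ZMod p)) ^ nt₁ =
        !![C 0 0, 0; 0, (C 0 0)⁻¹] ∧
      (!![1, 0; β, 1] : Matrix (Fin 2) (Fin 2) (ZMod p)) ^ n₂ * C *
          (!![1, α; 0, 1] : Matrix (Fin 2) (Fin 2) (ZMod p)) ^ (m₂ + mt₂) *
          (!![1, 0; β, 1] : Matrix (Fin 2) (Fin 2) (ZMod p)) ^ nt₂ =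
        !![C 0 0, 0; 0, (C 0 0)⁻¹] := by
  have hK : Function.Surjective (Nat.cast : ℕ → ZMod p) := ZMod.natCast_zmod_surjective
  obtain ⟨mt₁, nt₁, h₁⟩ :=
    exists_lowerUnitriangular_pow_mul_mul_pow_eq_diagonal hK hα hβ C hdet ha n₁ m₁
  obtain ⟨mt₂, nt₂, h₂⟩ :=
    exists_lowerUnitriangular_pow_mul_mul_pow_eq_diagonal hK hα hβ C hdet ha n₂ m₂
  exact ⟨mt₁, nt₁, mt₂, nt₂, h₁, h₂⟩
end

section
/- Let p be a prime, K = ZMod p, α, β ∈ K nonzero, and let δ ≤ p be a natural number. Suppose r, y ∈ K are nonzero with val(r) < δ and val(y) > p − δ, set s := (y⁻¹ − r⁻¹)·(α·β)⁻¹ and x := 1 + r·s·α·β, and assume val(s) < δ and val(s·x) > p − δ. Then s·x ≠ 0, the natural numbers m := p − val(y) and n := p − val(s·x) satisfy m < δ and n < δ, and the matrix A₀^{val(r)} · A₁^{val(s)} · A₀^{m} · A₁^{n} is diagonal. (Here val(t) ∈ {0,…,p−1} denotes the canonical representative of t ∈ ZMod p.) -/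
lemma pow_upper_tri {p : ℕ} (α : ZMod p) (n : ℕ) :
    (!![1, α; 0, 1] : Matrix (Fin 2) (Fin 2) (ZMod p)) ^ n = !![1, (n : ZMod p) * α; 0, 1] := by
  induction n with
  | zero => simp [Matrix.one_fin_two]
  | succ k ih =>
      rw [pow_succ, ih]
      ext i j
      fin_cases i <;> fin_cases j <;>
        simp [Matrix.mul_apply, Fin.sum_univ_two] <;> push_cast <;> ring

lemma pow_lower_tri {p : ℕ} (β : ZMod p) (n : ℕ) :
    (!![1, 0; β, 1] : Matrix (Fin 2) (Fin 2) (ZMod p)) ^ n = !![1, 0; (n : ZMod p) * β, 1] := by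
  induction n with
  | zero => simp [Matrix.one_fin_two]
  | succ k ih =>
      rw [pow_succ, ih]
      ext i j
      fin_cases i <;> fin_cases j <;>
        simp [Matrix.mul_apply, Fin.sum_univ_two] <;> push_cast <;> ring

/-- Structured search for short messages extendable to a diagonal hash
(Proposition on messages of the form `A₀^r A₁^s`).
`A₀ = !![1, α; 0, 1]`, `A₁ = !![1, 0; β, 1]` are the generalized Zémor generators,
and `ZMod.val` gives the canonical representative in `{0, …, p-1}`. -/
theorem diag_hash_short_message (p : ℕ) [Fact p.Prime] (α β : ZMod p)
    (hα : α ≠ 0) (hβ : β ≠ 0) (δ : ℕ) (hδ : δ ≤ p)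
    (r y : ZMod p) (hr : r ≠ 0) (hy : y ≠ 0)
    (hrv : r.val < δ) (hyv : p - δ < y.val)
    (s : ZMod p) (hs : s = (y⁻¹ - r⁻¹) * (α * β)⁻¹)
    (x : ZMod p) (hx : x = 1 + r * s * α * β)
    (hsv : s.val < δ) (hsxv : p - δ < (s * x).val) :
    s * x ≠ 0 ∧ p - y.val < δ ∧ p - (s * x).val < δ ∧
    ((!![1, α; 0, 1] : Matrix (Fin 2) (Fin 2) (ZMod p)) ^ r.val *
        (!![1, 0; β, 1] : Matrix (Fin 2) (Fin 2) (ZMod p)) ^ s.val *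
        (!![1, α; 0, 1] : Matrix (Fin 2) (Fin 2) (ZMod p)) ^ (p - y.val) *
        (!![1, 0; β, 1] : Matrix (Fin 2) (Fin 2) (ZMod p)) ^ (p - (s * x).val)).IsDiag := by
  have hp : 0 < p := (Fact.out : p.Prime).pos
  have hsx : s * x ≠ 0 := by
    intro h
    rw [h, ZMod.val_zero] at hsxv
    omega
  have hyvp : y.val < p := ZMod.val_lt y
  have hsxvp : (s * x).val < p := ZMod.val_lt (s * x)
  refine ⟨hsx, by omega, by omega, ?_⟩
  have hcast : ∀ t : ZMod p, ((p - t.val : ℕ) : ZMod p) = -t := by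
    intro t
    have := ZMod.val_le t
    push_cast [Nat.cast_sub this]
    simp [ZMod.natCast_self, ZMod.natCast_val, ZMod.cast_id]
  have hxy : x * y = r := by subst hx hs; field_simp; ring
  have hxx : x * (1 - y * s * α * β) = 1 := by linear_combination hx - s * α * β * hxy
  clear hs hx hsx hsxv hsv
  rw [pow_upper_tri, pow_lower_tri, pow_upper_tri, pow_lower_tri,
    ZMod.natCast_val, ZMod.cast_id, ZMod.natCast_val, ZMod.cast_id, hcast, hcast]
  intro i j hij
  fin_cases i <;> fin_cases j <;> simp_all
  · linear_combination (-α + α * y * s * α * β) * hxy + α * y * hxx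
  · linear_combination (-(s * β)) * hxx
end

section
/- Let p be a prime and K a field of characteristic p. Let α, β ∈ K with β ≠ 0 and (α·β)^p = α·β (i.e., α·β lies in the prime subfield of K). Then every matrix C = [[a,b],[c,d]] lying in the multiplicative monoid generated by A₀ and A₁ (i.e., every finite product of copies of A₀ and A₁, including the empty product) satisfies (c/β)^p = c/β and d^p = d; that is, c/β and d lie in the prime subfield of K. -/
/-- If `α·β` lies in the prime subfield (i.e. `(α·β)^p = α·β`), then every
finite product `C = !![a, b; c, d]` of the generalized Zémor generators
`A₀ = !![1, α; 0, 1]` and `A₁ = !![1, 0; β, 1]` satisfies `(c/β)^p = c/β` and `d^p = d`. -/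
theorem entries_in_prime_subfield (p : ℕ) [Fact p.Prime]
    (K : Type*) [Field K] [CharP K p] (α β : K) (hβ : β ≠ 0)
    (hab : (α * β) ^ p = α * β)
    (C : Matrix (Fin 2) (Fin 2) K)
    (hC : C ∈ Submonoid.closure
      {(!![1, α; 0, 1] : Matrix (Fin 2) (Fin 2) K), !![1, 0; β, 1]}) :
    (C 1 0 / β) ^ p = C 1 0 / β ∧ (C 1 1) ^ p = C 1 1 := by
  have key : ∀ C ∈ Submonoid.closure
      {(!![1, α; 0, 1] : Matrix (Fin 2) (Fin 2) K), !![1, 0; β, 1]},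
      (C 0 0) ^ p = C 0 0 ∧ (C 0 1 * β) ^ p = C 0 1 * β ∧
      (C 1 0 / β) ^ p = C 1 0 / β ∧ (C 1 1) ^ p = C 1 1 := by
    intro C hC
    have hp : p ≠ 0 := (Fact.out : p.Prime).ne_zero
    induction hC using Submonoid.closure_induction with
    | mem x hx =>
      rcases hx with rfl | rfl <;>
        simp [Matrix.cons_val_zero, Matrix.cons_val_one, div_self hβ, hab, hp]
    | one => simp [Matrix.one_apply, hp]
    | mul x y hx hy ihx ihy =>
      obtain ⟨ha, hb, hc, hd⟩ := ihx
      obtain ⟨ha', hb', hc', hd'⟩ := ihy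
      have e00 : (x * y) 0 0 = x 0 0 * y 0 0 + x 0 1 * y 1 0 := by
        simp [Matrix.mul_apply, Fin.sum_univ_two]
      have e01 : (x * y) 0 1 = x 0 0 * y 0 1 + x 0 1 * y 1 1 := by
        simp [Matrix.mul_apply, Fin.sum_univ_two]
      have e10 : (x * y) 1 0 = x 1 0 * y 0 0 + x 1 1 * y 1 0 := by
        simp [Matrix.mul_apply, Fin.sum_univ_two]
      have e11 : (x * y) 1 1 = x 1 0 * y 0 1 + x 1 1 * y 1 1 := by
        simp [Matrix.mul_apply, Fin.sum_univ_two]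
      have key2 : ∀ u v : K, u ^ p = u → v ^ p = v → (u + v) ^ p = u + v := by
        intro u v hu hv
        rw [add_pow_char, hu, hv]
      refine ⟨?_, ?_, ?_, ?_⟩
      · rw [e00]
        have h1 : (x 0 0 * y 0 0) ^ p = x 0 0 * y 0 0 := by rw [mul_pow, ha, ha']
        have h2 : (x 0 1 * y 1 0) ^ p = x 0 1 * y 1 0 := by
          have : x 0 1 * y 1 0 = (x 0 1 * β) * (y 1 0 / β) := by
            field_simp
          rw [this, mul_pow, hb, hc']
        exact key2 _ _ h1 h2
      · rw [e01, add_mul]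
        have h1 : (x 0 0 * y 0 1 * β) ^ p = x 0 0 * y 0 1 * β := by
          have : x 0 0 * y 0 1 * β = x 0 0 * (y 0 1 * β) := by ring
          rw [this, mul_pow, ha, hb']
        have h2 : (x 0 1 * y 1 1 * β) ^ p = x 0 1 * y 1 1 * β := by
          have : x 0 1 * y 1 1 * β = (x 0 1 * β) * y 1 1 := by ring
          rw [this, mul_pow, hb, hd']
        exact key2 _ _ h1 h2
      · rw [e10, add_div]
        have h1 : (x 1 0 * y 0 0 / β) ^ p = x 1 0 * y 0 0 / β := by
          have : x 1 0 * y 0 0 / β = (x 1 0 / β) * y 0 0 := by ring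
          rw [this, mul_pow, hc, ha']
        have h2 : (x 1 1 * y 1 0 / β) ^ p = x 1 1 * y 1 0 / β := by
          have : x 1 1 * y 1 0 / β = x 1 1 * (y 1 0 / β) := by ring
          rw [this, mul_pow, hd, hc']
        exact key2 _ _ h1 h2
      · rw [e11]
        have h1 : (x 1 0 * y 0 1) ^ p = x 1 0 * y 0 1 := by
          have : x 1 0 * y 0 1 = (x 1 0 / β) * (y 0 1 * β) := by
            field_simp
          rw [this, mul_pow, hc, hb']
        have h2 : (x 1 1 * y 1 1) ^ p = x 1 1 * y 1 1 := by rw [mul_pow, hd, hd']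
        exact key2 _ _ h1 h2
  obtain ⟨_, _, h3, h4⟩ := key C hC
  exact ⟨h3, h4⟩
end

section
/- Let p be a prime and K a field of characteristic p. Let α, β ∈ K be nonzero with (α·β)^p = α·β. Let C = [[a,b],[c,d]] be a finite product of copies of A₀ and A₁ (so that, in particular, det C = 1, (c/β)^p = c/β and d^p = d) and suppose a ≠ 0. Then there exist m, n ∈ K with m^p = m and n^p = n such that the (2,1) entry of C · A₀(m) · A₁(n) equals 0, i.e., C · A₀(m) · A₁(n) is upper triangular. -/
/-!
Conjugation by `diag(α⁻¹, 1)` turns `A₀` into `!![1, 1; 0, 1]` and `A₁` into `!![1, 0; α * β, 1]`,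
whose entries are fixed by Frobenius; hence so are the entries of the conjugate
`!![a, b / α; α * c, d]` of `C`. The lower-left entry of `C * A₀(m) * A₁(n)` is
`c + (c * m * α + d) * n * β`, which vanishes for `m = 0`, `n = -c / (d * β)` if `d ≠ 0`, and for
`m = 1`, `n = -1 / (α * β)` if `d = 0`; these `m`, `n` are fixed since `α * c`, `d` and `α * β` are.
-/

section

variable {K : Type*} [Field K]

namespace Matrix

def diagInvOneUnit {α : K} (hα : α ≠ 0) : (Matrix (Fin 2) (Fin 2) K)ˣ where
  val := diagonal ![α⁻¹, 1]
  inv := diagonal ![α, 1]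
  val_inv := by ext i j; fin_cases i <;> fin_cases j <;> simp [hα]
  inv_val := by ext i j; fin_cases i <;> fin_cases j <;> simp [hα]

theorem diagInvOneUnit_smul {α : K} (hα : α ≠ 0) (X : Matrix (Fin 2) (Fin 2) K) :
    ConjAct.toConjAct (diagInvOneUnit hα) • X = !![X 0 0, α⁻¹ * X 0 1; α * X 1 0, X 1 1] := by
  rw [ConjAct.units_smul_def, ConjAct.ofConjAct_toConjAct]
  ext i j; fin_cases i <;> fin_cases j <;> simp [diagInvOneUnit, hα, mul_comm]

theorem map_diagInvOneUnit_smul_of_mem_closure (σ : K →+* K) {α β : K} (hα : α ≠ 0)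
    (hαβ : σ (α * β) = α * β) {C : Matrix (Fin 2) (Fin 2) K}
    (hC : C ∈ Submonoid.closure {!![1, α; 0, 1], !![1, 0; β, 1]}) :
    (ConjAct.toConjAct (diagInvOneUnit hα) • C).map σ =
      ConjAct.toConjAct (diagInvOneUnit hα) • C := by
  let conj := MulDistribMulAction.toMonoidHom (Matrix (Fin 2) (Fin 2) K)
    (ConjAct.toConjAct (diagInvOneUnit hα))
  refine MonoidHom.eqOn_closureM (f := σ.mapMatrix.toMonoidHom.comp conj) (g := conj) ?_ hC
  rintro X (rfl | rfl) <;> ext i j <;> fin_cases i <;> fin_cases j <;>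
    simp [conj, diagInvOneUnit_smul, hα, hαβ]

end Matrix

theorem mul_transvections_apply_one_zero (C : Matrix (Fin 2) (Fin 2) K) (s t : K) :
    (C * !![1, s; 0, 1] * !![1, 0; t, 1]) 1 0 = C 1 0 + (C 1 0 * s + C 1 1) * t := by
  simp [Matrix.mul_apply]

theorem Subfield.exists_add_mul_add_mul_eq_zero (F : Subfield K) {c d : K} (hc : c ∈ F)
    (hd : d ∈ F) : ∃ m ∈ F, ∃ n ∈ F, c + (c * m + d) * n = 0 := by
  rcases eq_or_ne d 0 with rfl | hd0
  · exact ⟨1, F.one_mem, -1, F.neg_mem F.one_mem, by ring⟩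
  · refine ⟨0, F.zero_mem, -c / d, F.div_mem (F.neg_mem hc) hd, ?_⟩
    field_simp
    ring

theorem exists_fixed_mul_transvections_apply_one_zero_eq_zero (σ : K →+* K) {α β : K}
    (hα : α ≠ 0) (hβ : β ≠ 0) (hαβ : σ (α * β) = α * β) {C : Matrix (Fin 2) (Fin 2) K}
    (hC : C ∈ Submonoid.closure {!![1, α; 0, 1], !![1, 0; β, 1]}) :
    ∃ m n : K, σ m = m ∧ σ n = n ∧ (C * !![1, m * α; 0, 1] * !![1, 0; n * β, 1]) 1 0 = 0 := by
  set F := σ.eqLocusField (RingHom.id K)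
  have hfix := Matrix.map_diagInvOneUnit_smul_of_mem_closure σ hα hαβ hC
  have hc : α * C 1 0 ∈ F := by simpa [F, Matrix.diagInvOneUnit_smul] using congrFun₂ hfix 1 0
  have hd : C 1 1 ∈ F := by simpa [F, Matrix.diagInvOneUnit_smul] using congrFun₂ hfix 1 1
  have hγ : α * β ∈ F := hαβ
  obtain ⟨m, hm, n, hn, h⟩ := F.exists_add_mul_add_mul_eq_zero hc hd
  refine ⟨m, n / (α * β), hm, F.div_mem hn hγ, ?_⟩
  rw [mul_transvections_apply_one_zero]
  field_simp
  linear_combination h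

end

theorem triangular_hash_extension_general (p : ℕ) [Fact p.Prime]
    (K : Type*) [Field K] [CharP K p] (α β : K) (hα : α ≠ 0) (hβ : β ≠ 0)
    (hab : (α * β) ^ p = α * β)
    (C : Matrix (Fin 2) (Fin 2) K)
    (hC : C ∈ Submonoid.closure
      {(!![1, α; 0, 1] : Matrix (Fin 2) (Fin 2) K), !![1, 0; β, 1]}) :
    ∃ m n : K, m ^ p = m ∧ n ^ p = n ∧
      (C * !![1, m * α; 0, 1] * !![1, 0; n * β, 1]) 1 0 = 0 := by
  simpa only [frobenius_def] using exists_fixed_mul_transvections_apply_one_zero_eq_zero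
    (frobenius K p) hα hβ (by rwa [frobenius_def]) hC

/-- If `α·β` lies in the prime subfield, any hash value `C` (a finite product
of the generalized Zémor generators `A₀ = !![1, α; 0, 1]` and `A₁ = !![1, 0; β, 1]`)
with nonzero `(1,1)` entry can be extended by `A₀(m)·A₁(n) = !![1, m·α; 0, 1] * !![1, 0; n·β, 1]`
with `m`, `n` in the prime subfield to an upper triangular matrix. -/
theorem triangular_hash_extension (p : ℕ) [Fact p.Prime]
    (K : Type*) [Field K] [CharP K p] (α β : K) (hα : α ≠ 0) (hβ : β ≠ 0)
    (hab : (α * β) ^ p = α * β)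
    (C : Matrix (Fin 2) (Fin 2) K)
    (hC : C ∈ Submonoid.closure
      {(!![1, α; 0, 1] : Matrix (Fin 2) (Fin 2) K), !![1, 0; β, 1]})
    (ha : C 0 0 ≠ 0) :
    ∃ m n : K, m ^ p = m ∧ n ^ p = n ∧
      (C * !![1, m * α; 0, 1] * !![1, 0; n * β, 1]) 1 0 = 0 :=
  triangular_hash_extension_general p K α β hα hβ hab C hC
end

section
/- Let p be a prime, K a field of characteristic p, and α, β ∈ K such that α·β = ι(c₀) for some c₀ ∈ ZMod p, where ι : ZMod p → K is the canonical ring homomorphism. Let δ ≤ p be a natural number and let m, s be natural numbers with m < δ and s < δ such that 1 + m·s·c₀ ≠ 0 in ZMod p. Set t := s·(1 + m·s·c₀)⁻¹ ∈ ZMod p and suppose val(t) > p − δ. Then n := p − val(t) satisfies n < δ, and for every natural number r the matrix A₀^r · A₁^s · A₀^m · A₁^n has (2,1) entry equal to 0, i.e., it is upper triangular. (Here val(t) ∈ {0,…,p−1} denotes the canonical representative of t ∈ ZMod p.) -/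
/-!
Multiplying by a power of `A₀` on the left does not change the bottom row, so the `(2,1)` entry
of `A₀^r A₁^s A₀^m A₁^n` is `β (s + n (1 + m s α β))`. Since `n = p - val t ≡ -t (mod p)` and
`α β = ι c₀`, the bracket is the image under `ι` of `s - t (1 + m s c₀) = 0`.
-/

open Matrix

section Unitriangular

variable {R : Type*} [Semiring R]

theorem upper_unitriangular_pow (a : R) (k : ℕ) :
    !![1, a; 0, 1] ^ k = !![1, (k : R) * a; 0, 1] := by
  induction k with
  | zero => simp [one_fin_two]
  | succ k ih =>
    rw [pow_succ, ih, mul_fin_two]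
    simp [add_mul, add_comm]

theorem lower_unitriangular_pow (b : R) (k : ℕ) :
    !![1, 0; b, 1] ^ k = !![1, 0; (k : R) * b, 1] := by
  induction k with
  | zero => simp [one_fin_two]
  | succ k ih =>
    rw [pow_succ, ih, mul_fin_two]
    simp [add_mul, add_comm]

end Unitriangular

theorem upper_lower_upper_lower_apply_one_zero {R : Type*} [CommSemiring R] (a b c d : R) :
    (!![1, a; 0, 1] * !![1, 0; b, 1] * !![1, c; 0, 1] * !![1, 0; d, 1]) 1 0 =
      b + d * (1 + c * b) := by
  simp
  ring

theorem ZMod.natCast_sub_val {p : ℕ} [NeZero p] (t : ZMod p) :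
    ((p - t.val : ℕ) : ZMod p) = -t := by
  rw [Nat.cast_sub (ZMod.val_lt t).le, ZMod.natCast_self, ZMod.natCast_zmod_val, zero_sub]

theorem upper_triangular_short_message_general (p : ℕ) [Fact p.Prime]
    (K : Type*) [Field K] [CharP K p] (α β : K) (c₀ : ZMod p)
    (hab : α * β = ZMod.castHom (dvd_refl p) K c₀)
    (δ : ℕ) (m s : ℕ)
    (hx : (1 : ZMod p) + (m : ZMod p) * (s : ZMod p) * c₀ ≠ 0)
    (ht : p - δ < ((s : ZMod p) * ((1 : ZMod p) + (m : ZMod p) * (s : ZMod p) * c₀)⁻¹).val) :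
    p - ((s : ZMod p) * ((1 : ZMod p) + (m : ZMod p) * (s : ZMod p) * c₀)⁻¹).val < δ ∧
    ∀ r : ℕ,
      ((!![1, α; 0, 1] : Matrix (Fin 2) (Fin 2) K) ^ r *
          (!![1, 0; β, 1] : Matrix (Fin 2) (Fin 2) K) ^ s *
          (!![1, α; 0, 1] : Matrix (Fin 2) (Fin 2) K) ^ m *
          (!![1, 0; β, 1] : Matrix (Fin 2) (Fin 2) K) ^
            (p - ((s : ZMod p) * ((1 : ZMod p) + (m : ZMod p) * (s : ZMod p) * c₀)⁻¹).val))
        1 0 = 0 := by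
  set x : ZMod p := 1 + (m : ZMod p) * (s : ZMod p) * c₀
  set t : ZMod p := (s : ZMod p) * x⁻¹
  have ht_lt : t.val < p := ZMod.val_lt t
  refine ⟨by omega, fun r => ?_⟩
  have hn : (s : ZMod p) + ((p - t.val : ℕ) : ZMod p) * x = 0 := by
    rw [ZMod.natCast_sub_val, neg_mul, mul_assoc, inv_mul_cancel₀ hx, mul_one, add_neg_cancel]
  have hnK : (s : K) + ((p - t.val : ℕ) : K) * (1 + m * s * (α * β)) = 0 := by
    simpa [x, hab] using congrArg (ZMod.castHom (dvd_refl p) K) hn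
  simp only [upper_unitriangular_pow, lower_unitriangular_pow,
    upper_lower_upper_lower_apply_one_zero]
  linear_combination β * hnK

/-- Structured search for short messages `A₀^r A₁^s` extendable to an upper
triangular hash, when `α·β` comes from the prime field via the canonical map
`ι = ZMod.castHom (dvd_refl p) K`. Here `A₀ = !![1, α; 0, 1]`, `A₁ = !![1, 0; β, 1]`. -/
theorem upper_triangular_short_message (p : ℕ) [Fact p.Prime]
    (K : Type*) [Field K] [CharP K p] (α β : K) (c₀ : ZMod p)
    (hab : α * β = ZMod.castHom (dvd_refl p) K c₀)
    (δ : ℕ) (hδ : δ ≤ p) (m s : ℕ) (hm : m < δ) (hs : s < δ)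
    (hx : (1 : ZMod p) + (m : ZMod p) * (s : ZMod p) * c₀ ≠ 0)
    (ht : p - δ < ((s : ZMod p) * ((1 : ZMod p) + (m : ZMod p) * (s : ZMod p) * c₀)⁻¹).val) :
    p - ((s : ZMod p) * ((1 : ZMod p) + (m : ZMod p) * (s : ZMod p) * c₀)⁻¹).val < δ ∧
    ∀ r : ℕ,
      ((!![1, α; 0, 1] : Matrix (Fin 2) (Fin 2) K) ^ r *
          (!![1, 0; β, 1] : Matrix (Fin 2) (Fin 2) K) ^ s *
          (!![1, α; 0, 1] : Matrix (Fin 2) (Fin 2) K) ^ m *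
          (!![1, 0; β, 1] : Matrix (Fin 2) (Fin 2) K) ^
            (p - ((s : ZMod p) * ((1 : ZMod p) + (m : ZMod p) * (s : ZMod p) * c₀)⁻¹).val))
        1 0 = 0 :=
  upper_triangular_short_message_general p K α β c₀ hab δ m s hx ht
end

section
/- Let p be a prime, K a field of characteristic p, and α, β ∈ K nonzero with (α·β)^p ≠ α·β (i.e., α·β does not lie in the prime subfield). Let C = [[a,b],[c,d]] be a 2×2 matrix over K with c ≠ 0, and define γ := d·((d·β)^{p−1} − c^{p−1}) / (α·c^p·(1 − (α·β)^{p−1})). Then for all m, n ∈ K, the following are equivalent: (i) m^p = m, n^p = n, and the (2,1) entry of C · A₀(m) · A₁(n) equals 0; (ii) γ^p = γ, m = γ, and n·β·(m·c·α + d) = −c. -/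
/-!
With `D = m·c·α + d`, the lower-left entry of `C · A₀(m) · A₁(n)` is `c + D·n·β`, so it vanishes
exactly when `n = -u⁻¹` for `u = β·D/c = m·(α·β) + d·β/c`. Inversion and negation preserve the
prime subfield, and for `m` in the prime subfield Frobenius acts on `u` by
`u ↦ m·(α·β)^p + (d·β/c)^p`. Hence `n` lies in the prime subfield iff
`m·((α·β)^p - α·β) = d·β/c - (d·β/c)^p`, and since `α·β` is not in the prime subfield this
pins down `m = γ`.
-/

theorem Matrix.mul_unitUpper_mul_unitLower_apply_one_zero {R : Type*} [CommRing R]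
    (C : Matrix (Fin 2) (Fin 2) R) (x y : R) :
    (C * !![1, x; 0, 1] * !![1, 0; y, 1]) 1 0 = C 1 0 + (C 1 0 * x + C 1 1) * y := by
  simp [Matrix.mul_apply, Fin.sum_univ_succ]

section CharP

variable {K : Type*} [Field K] (p : ℕ) [Fact p.Prime] [CharP K p]

theorem neg_inv_pow_char_eq_self_iff (x : K) : (-x⁻¹) ^ p = -x⁻¹ ↔ x ^ p = x := by
  rw [neg_pow, neg_one_pow_char, inv_pow, neg_one_mul, neg_inj, _root_.inv_inj]

theorem mul_add_pow_char_eq_self_iff {m s e : K} (hm : m ^ p = m) (hs : s ^ p ≠ s) :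
    (m * s + e) ^ p = m * s + e ↔ m = (e - e ^ p) / (s ^ p - s) := by
  rw [add_pow_char, mul_pow, hm, eq_div_iff (sub_ne_zero.mpr hs)]
  constructor <;> intro h <;> linear_combination h

end CharP

theorem div_sub_pow_div_sub_pow_eq {K : Type*} [Field K] {p : ℕ} (hp : 0 < p) {α β c : K}
    (hs : (α * β) ^ p ≠ α * β) (hc : c ≠ 0) (d : K) :
    (d * β / c - (d * β / c) ^ p) / ((α * β) ^ p - α * β) =
      d * ((d * β) ^ (p - 1) - c ^ (p - 1)) / (α * c ^ p * (1 - (α * β) ^ (p - 1))) := by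
  obtain ⟨q, rfl⟩ : ∃ q, p = q + 1 := ⟨p - 1, by omega⟩
  rw [Nat.add_sub_cancel]
  have hαβ : α * β ≠ 0 := by rintro h; simp [h] at hs
  have hαβ_pow : 1 - (α * β) ^ q ≠ 0 := by
    rw [sub_ne_zero]; rintro h; exact hs (by rw [pow_succ, ← h, one_mul])
  have hα : α ≠ 0 := left_ne_zero_of_mul hαβ
  rw [div_pow, div_eq_div_iff (sub_ne_zero.mpr hs) (by positivity)]
  field_simp
  ring

theorem upper_triangular_iff_gamma_general (p : ℕ) [Fact p.Prime]
    (K : Type*) [Field K] [CharP K p] (α β : K)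
    (hab : (α * β) ^ p ≠ α * β)
    (C : Matrix (Fin 2) (Fin 2) K) (hc : C 1 0 ≠ 0) :
    ∀ m n : K,
      (m ^ p = m ∧ n ^ p = n ∧
          (C * !![1, m * α; 0, 1] * !![1, 0; n * β, 1]) 1 0 = 0) ↔
      ((C 1 1 * ((C 1 1 * β) ^ (p - 1) - C 1 0 ^ (p - 1)) /
            (α * C 1 0 ^ p * (1 - (α * β) ^ (p - 1)))) ^ p =
          C 1 1 * ((C 1 1 * β) ^ (p - 1) - C 1 0 ^ (p - 1)) /
            (α * C 1 0 ^ p * (1 - (α * β) ^ (p - 1))) ∧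
        m = C 1 1 * ((C 1 1 * β) ^ (p - 1) - C 1 0 ^ (p - 1)) /
            (α * C 1 0 ^ p * (1 - (α * β) ^ (p - 1))) ∧
        n * β * (m * C 1 0 * α + C 1 1) = -C 1 0) := by
  intro m n
  rw [Matrix.mul_unitUpper_mul_unitLower_apply_one_zero, ← div_sub_pow_div_sub_pow_eq
    (Fact.out : p.Prime).pos hab hc]
  set γ := (C 1 1 * β / C 1 0 - (C 1 1 * β / C 1 0) ^ p) / ((α * β) ^ p - α * β)
  have key (hm : m ^ p = m) (hn : n * β * (m * C 1 0 * α + C 1 1) = -C 1 0) :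
      n ^ p = n ↔ m = γ := by
    have hu : -n = (m * (α * β) + C 1 1 * β / C 1 0)⁻¹ :=
      eq_inv_of_mul_eq_one_left (by field_simp; linear_combination -hn)
    rw [neg_eq_iff_eq_neg.mp hu, neg_inv_pow_char_eq_self_iff,
      mul_add_pow_char_eq_self_iff p hm hab]
  constructor
  · rintro ⟨hm, hn, hE⟩
    have hE' : n * β * (m * C 1 0 * α + C 1 1) = -C 1 0 := by linear_combination hE
    have hmγ := (key hm hE').1 hn
    exact ⟨hmγ ▸ hm, hmγ, hE'⟩
  · rintro ⟨hγ, hmγ, hE⟩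
    have hm : m ^ p = m := hmγ ▸ hγ
    exact ⟨hm, (key hm hE).2 hmγ, by linear_combination hE⟩

/-- When `α·β` is not in the prime subfield, the exact condition for
`C · A₀(m) · A₁(n)` (with `m, n` in the prime subfield) to be upper triangular,
in terms of `γ = d·((d·β)^(p-1) - c^(p-1)) / (α·c^p·(1 - (α·β)^(p-1)))`.
Here `A₀(m) = !![1, m·α; 0, 1]` and `A₁(n) = !![1, 0; n·β, 1]`. -/
theorem upper_triangular_iff_gamma (p : ℕ) [Fact p.Prime]
    (K : Type*) [Field K] [CharP K p] (α β : K) (hα : α ≠ 0) (hβ : β ≠ 0)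
    (hab : (α * β) ^ p ≠ α * β)
    (C : Matrix (Fin 2) (Fin 2) K) (hc : C 1 0 ≠ 0) :
    ∀ m n : K,
      (m ^ p = m ∧ n ^ p = n ∧
          (C * !![1, m * α; 0, 1] * !![1, 0; n * β, 1]) 1 0 = 0) ↔
      ((C 1 1 * ((C 1 1 * β) ^ (p - 1) - C 1 0 ^ (p - 1)) /
            (α * C 1 0 ^ p * (1 - (α * β) ^ (p - 1)))) ^ p =
          C 1 1 * ((C 1 1 * β) ^ (p - 1) - C 1 0 ^ (p - 1)) /
            (α * C 1 0 ^ p * (1 - (α * β) ^ (p - 1))) ∧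
        m = C 1 1 * ((C 1 1 * β) ^ (p - 1) - C 1 0 ^ (p - 1)) /
            (α * C 1 0 ^ p * (1 - (α * β) ^ (p - 1))) ∧
        n * β * (m * C 1 0 * α + C 1 1) = -C 1 0) :=
  upper_triangular_iff_gamma_general p K α β hab C hc
end

section
/- Let p be a prime and K a field with exactly p² elements. Let α, β, c, d ∈ K with α, β, c, d all nonzero and (α·β)^{p−1} ≠ 1. Then γ := d·((d·β)^{p−1} − c^{p−1}) / (α·c^p·(1 − (α·β)^{p−1})) satisfies γ^p = γ; that is, γ always lies in the prime subfield of K. -/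
/-!
In a field with `p²` elements every nonzero `x` has `x ^ (p² - 1) = 1`, so Frobenius sends
`u = x ^ (p - 1)` to `u ^ p = u⁻¹`, and it sends `c ^ p` to `c`. Applied to the numerator and
denominator of `γ`, it therefore replaces every `(p - 1)`-st power by its inverse; clearing
these inverses gives back `γ`.
-/

theorem div_pow_eq_self_of_pow_mul_eq_mul_pow {K : Type*} [Field K] {n : ℕ} (hn : n ≠ 0)
    {a b : K} (h : a ^ n * b = a * b ^ n) : (a / b) ^ n = a / b := by
  rcases eq_or_ne b 0 with rfl | hb
  · simp [zero_pow hn]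
  · rw [div_pow, div_eq_div_iff (pow_ne_zero n hb) hb, h]

section CardSq

variable {K : Type*} [Field K] [Fintype K] {q : ℕ} (hcard : Fintype.card K = q ^ 2)
include hcard

theorem pow_pow_eq_self_of_card_eq_sq (x : K) : (x ^ q) ^ q = x := by
  rw [← pow_mul, ← sq, ← hcard, FiniteField.pow_card]

theorem pow_pow_sub_one_eq_inv_of_card_eq_sq {x : K} (hx : x ≠ 0) :
    (x ^ (q - 1)) ^ q = (x ^ (q - 1))⁻¹ := by
  refine eq_inv_of_mul_eq_one_left ?_
  rw [← pow_mul, ← pow_add, ← FiniteField.pow_card_sub_one_eq_one x hx, hcard]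
  congr 1
  rcases q with _ | q
  · simp
  · simp only [Nat.add_sub_cancel]
    ring_nf
    omega

end CardSq

theorem gamma_in_prime_subfield_card_p_sq_general (p : ℕ) [Fact p.Prime]
    (K : Type*) [Field K] [Fintype K] (hcard : Fintype.card K = p ^ 2)
    (α β c d : K) (hα : α ≠ 0) (hβ : β ≠ 0) (hc : c ≠ 0) (hd : d ≠ 0) :
    (d * ((d * β) ^ (p - 1) - c ^ (p - 1)) / (α * c ^ p * (1 - (α * β) ^ (p - 1)))) ^ p =
      d * ((d * β) ^ (p - 1) - c ^ (p - 1)) / (α * c ^ p * (1 - (α * β) ^ (p - 1))) := by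
  have hp : p ≠ 0 := (Fact.out : p.Prime).ne_zero
  have : CharP K p := charP_of_card_eq_prime_pow hcard
  apply div_pow_eq_self_of_pow_mul_eq_mul_pow hp
  rw [mul_pow d, mul_pow (α * c ^ p), mul_pow α (c ^ p), sub_pow_char, sub_pow_char, one_pow,
    pow_pow_eq_self_of_card_eq_sq hcard,
    pow_pow_sub_one_eq_inv_of_card_eq_sq hcard (mul_ne_zero hd hβ),
    pow_pow_sub_one_eq_inv_of_card_eq_sq hcard hc,
    pow_pow_sub_one_eq_inv_of_card_eq_sq hcard (mul_ne_zero hα hβ),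
    ← mul_pow_sub_one hp c, ← mul_pow_sub_one hp d, ← mul_pow_sub_one hp α, mul_pow, mul_pow]
  field_simp
  ring

/-- Over a field with exactly `p²` elements, the quantity
`γ = d·((d·β)^(p-1) - c^(p-1)) / (α·c^p·(1 - (α·β)^(p-1)))` always lies in the prime
subfield, i.e. `γ^p = γ`. -/
theorem gamma_in_prime_subfield_card_p_sq (p : ℕ) [Fact p.Prime]
    (K : Type*) [Field K] [Fintype K] (hcard : Fintype.card K = p ^ 2)
    (α β c d : K) (hα : α ≠ 0) (hβ : β ≠ 0) (hc : c ≠ 0) (hd : d ≠ 0)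
    (hab : (α * β) ^ (p - 1) ≠ 1) :
    (d * ((d * β) ^ (p - 1) - c ^ (p - 1)) / (α * c ^ p * (1 - (α * β) ^ (p - 1)))) ^ p =
      d * ((d * β) ^ (p - 1) - c ^ (p - 1)) / (α * c ^ p * (1 - (α * β) ^ (p - 1))) :=
  gamma_in_prime_subfield_card_p_sq_general p K hcard α β c d hα hβ hc hd
end

section
/- Let p be a prime, K a field of characteristic p, and α, β ∈ K nonzero with (α·β)^{p−1} ≠ 1. Let C = [[a,b],[c,d]] be a 2×2 matrix over K with c ≠ 0, let m, n ∈ K satisfy m^p = m and n^p = n, and write C' = [[a',b'],[c',d']] := C · A₀(m) · A₁(n); assume c' ≠ 0. Define γ := d·((d·β)^{p−1} − c^{p−1}) / (α·c^p·(1 − (α·β)^{p−1})) and γ' := d'·((d'·β)^{p−1} − (c')^{p−1}) / (α·(c')^p·(1 − (α·β)^{p−1})). Then γ' = (c/c')^{p+1}·(γ − m). -/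
/-!
Only the bottom row `(c, d)` of the matrix enters `γ`, and `c ^ (p + 1) * γ` equals
`φ(c, d) / (α (1 - (αβ)^(p-1)))` for the Frobenius-twisted form
`φ(c, d) = β^(p-1) c d^p - c^p d`. Right multiplication by `A₀(m)` sends `(c, d)` to
`(c, d + mαc)` and by `A₁(n)` sends `(c, d)` to `(c + nβd, d)`. Since `m` and `n` are fixed
by Frobenius, the first move lowers `φ` by `m α (1 - (αβ)^(p-1)) c^(p+1)` and the second
leaves `φ` unchanged; this is the claim after multiplying through by `c' ^ (p + 1)`.
-/

section FrobeniusForm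

variable {R : Type*} [CommRing R] (p : ℕ) [Fact p.Prime] [CharP R p]

def frobeniusForm (β c d : R) : R := β ^ (p - 1) * c * d ^ p - c ^ p * d

variable {p}

theorem frobeniusForm_add_mul_fst {t : R} (ht : t ^ p = t) (α β c d : R) :
    frobeniusForm p β c (d + t * α * c) =
      frobeniusForm p β c d - t * α * (1 - (α * β) ^ (p - 1)) * c ^ (p + 1) := by
  have hα : α * α ^ (p - 1) = α ^ p := mul_pow_sub_one (Fact.out : p.Prime).ne_zero α
  have hfrob : (d + t * α * c) ^ p = d ^ p + t * α ^ p * c ^ p := by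
    rw [add_pow_char, mul_pow, mul_pow, ht]
  simp only [frobeniusForm, hfrob]
  linear_combination -(t * β ^ (p - 1) * c ^ (p + 1)) * hα

theorem frobeniusForm_add_mul_snd {t : R} (ht : t ^ p = t) (β c d : R) :
    frobeniusForm p β (c + t * β * d) d = frobeniusForm p β c d := by
  have hβ : β ^ (p - 1) * β = β ^ p := pow_sub_one_mul (Fact.out : p.Prime).ne_zero β
  have hfrob : (c + t * β * d) ^ p = c ^ p + t * β ^ p * d ^ p := by
    rw [add_pow_char, mul_pow, mul_pow, ht]
  simp only [frobeniusForm, hfrob]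
  linear_combination t * d ^ (p + 1) * hβ

end FrobeniusForm

section Gamma

variable {K : Type*} [Field K] (p : ℕ)

def gammaValue (α β c d : K) : K :=
  d * ((d * β) ^ (p - 1) - c ^ (p - 1)) / (α * c ^ p * (1 - (α * β) ^ (p - 1)))

theorem gammaValue_mul_pow [Fact p.Prime] [CharP K p] (α β c d : K) :
    gammaValue p α β c d * c ^ (p + 1) =
      frobeniusForm p β c d / (α * (1 - (α * β) ^ (p - 1))) := by
  have hp := (Fact.out : p.Prime).ne_zero
  rcases eq_or_ne c 0 with rfl | hc
  · simp [gammaValue, frobeniusForm, hp]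
  have hc' : c ^ (p - 1) * c = c ^ p := pow_sub_one_mul hp c
  have hd : d * d ^ (p - 1) = d ^ p := mul_pow_sub_one hp d
  rw [gammaValue, show α * c ^ p * (1 - (α * β) ^ (p - 1)) =
      c ^ p * (α * (1 - (α * β) ^ (p - 1))) by ring,
    ← div_div, div_mul_eq_mul_div, frobeniusForm]
  congr 1
  field_simp
  linear_combination β ^ (p - 1) * c * c ^ p * hd - d * c ^ p * hc'

end Gamma

theorem bottomRow_mul_elementary {R : Type*} [CommRing R] (C : Matrix (Fin 2) (Fin 2) R)
    (x y : R) :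
    (C * !![1, x; 0, 1] * !![1, 0; y, 1]) 1 0 = C 1 0 + y * (C 1 1 + x * C 1 0) ∧
      (C * !![1, x; 0, 1] * !![1, 0; y, 1]) 1 1 = C 1 1 + x * C 1 0 := by
  simp only [Fin.isValue, Matrix.mul_apply, Matrix.of_apply, Matrix.cons_val',
    Matrix.cons_val_fin_one, Fin.sum_univ_two, Matrix.cons_val_zero, Matrix.cons_val_one,
    mul_one, mul_zero, add_zero, add_right_inj, zero_add]
  constructor <;> ring

theorem gamma_transformation_general (p : ℕ) [Fact p.Prime]
    (K : Type*) [Field K] [CharP K p] (α β : K) (hα : α ≠ 0)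
    (hab : (α * β) ^ (p - 1) ≠ 1)
    (C C' : Matrix (Fin 2) (Fin 2) K)
    (m n : K) (hm : m ^ p = m) (hn : n ^ p = n)
    (hC' : C' = C * !![1, m * α; 0, 1] * !![1, 0; n * β, 1])
    (hc' : C' 1 0 ≠ 0)
    (γ γ' : K)
    (hγ : γ = C 1 1 * ((C 1 1 * β) ^ (p - 1) - C 1 0 ^ (p - 1)) /
        (α * C 1 0 ^ p * (1 - (α * β) ^ (p - 1))))
    (hγ' : γ' = C' 1 1 * ((C' 1 1 * β) ^ (p - 1) - C' 1 0 ^ (p - 1)) /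
        (α * C' 1 0 ^ p * (1 - (α * β) ^ (p - 1)))) :
    γ' = (C 1 0 / C' 1 0) ^ (p + 1) * (γ - m) := by
  obtain ⟨hc'_row, hd'_row⟩ := bottomRow_mul_elementary C (m * α) (n * β)
  rw [← hC'] at hc'_row hd'_row
  have hscale : α * (1 - (α * β) ^ (p - 1)) ≠ 0 := mul_ne_zero hα (sub_ne_zero.mpr hab.symm)
  have hγ_mul : γ * C 1 0 ^ (p + 1) =
      frobeniusForm p β (C 1 0) (C 1 1) / (α * (1 - (α * β) ^ (p - 1))) :=
    hγ ▸ gammaValue_mul_pow p α β _ _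
  have hγ'_mul : γ' * C' 1 0 ^ (p + 1) =
      frobeniusForm p β (C' 1 0) (C' 1 1) / (α * (1 - (α * β) ^ (p - 1))) :=
    hγ' ▸ gammaValue_mul_pow p α β _ _
  have hform : frobeniusForm p β (C' 1 0) (C' 1 1) = frobeniusForm p β (C 1 0) (C 1 1) -
      m * α * (1 - (α * β) ^ (p - 1)) * C 1 0 ^ (p + 1) := by
    rw [hc'_row, hd'_row, frobeniusForm_add_mul_snd hn, frobeniusForm_add_mul_fst hm]
  rw [div_pow, div_mul_eq_mul_div, eq_div_iff (pow_ne_zero _ hc'), hγ'_mul, hform, sub_div,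
    ← hγ_mul]
  field_simp

/-- Transformation rule for `γ` under right multiplication by
`A₀(m)·A₁(n) = !![1, m·α; 0, 1] * !![1, 0; n·β, 1]` with `m, n` in the prime subfield:
`γ' = (c/c')^(p+1)·(γ - m)`, where
`γ(M) = M₁₁·((M₁₁·β)^(p-1) - M₁₀^(p-1)) / (α·M₁₀^p·(1 - (α·β)^(p-1)))`. -/
theorem gamma_transformation (p : ℕ) [Fact p.Prime]
    (K : Type*) [Field K] [CharP K p] (α β : K) (hα : α ≠ 0) (hβ : β ≠ 0)
    (hab : (α * β) ^ (p - 1) ≠ 1)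
    (C C' : Matrix (Fin 2) (Fin 2) K) (hc : C 1 0 ≠ 0)
    (m n : K) (hm : m ^ p = m) (hn : n ^ p = n)
    (hC' : C' = C * !![1, m * α; 0, 1] * !![1, 0; n * β, 1])
    (hc' : C' 1 0 ≠ 0)
    (γ γ' : K)
    (hγ : γ = C 1 1 * ((C 1 1 * β) ^ (p - 1) - C 1 0 ^ (p - 1)) /
        (α * C 1 0 ^ p * (1 - (α * β) ^ (p - 1))))
    (hγ' : γ' = C' 1 1 * ((C' 1 1 * β) ^ (p - 1) - C' 1 0 ^ (p - 1)) /
        (α * C' 1 0 ^ p * (1 - (α * β) ^ (p - 1)))) :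
    γ' = (C 1 0 / C' 1 0) ^ (p + 1) * (γ - m) :=
  gamma_transformation_general p K α β hα hab C C' m n hm hn hC' hc' γ γ' hγ hγ'
end

section
/- Let p be a prime, K a field of characteristic p, and α, β ∈ K nonzero with (α·β)^{p−1} ≠ 1. Let C = [[a,b],[c,d]] with c ≠ 0, let m, n ∈ K satisfy m^p = m and n^p = n, write C' = [[a',b'],[c',d']] := C · A₀(m) · A₁(n), and assume c' ≠ 0. Let γ := d·((d·β)^{p−1} − c^{p−1}) / (α·c^p·(1 − (α·β)^{p−1})) and γ' := d'·((d'·β)^{p−1} − (c')^{p−1}) / (α·(c')^p·(1 − (α·β)^{p−1})). Define q₃ := c^{p²}·α·β·((α·β)^{p²−1} − 1), q₂ := c^{p²}·α·β·γ^p − c^{p²}·(α·β)^{p²}·γ + (d·β)^{p²} − c^{p²−1}·d·β, q₁ := c^{p²−1}·d·β·γ^p − (d·β)^{p²}·γ, and q₀ := c^{p²}·(γ^p − γ). Then γ'^p = γ' if and only if q₃·m²·n + q₂·m·n + q₁·n + q₀ = 0. (Consequently, C' can be extended on the right by a further product A₀(m')·A₁(n') with m', n' in the prime subfield to an upper triangular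 matrix exactly when this cubic equation has the solution (m, n).) -/
/-- The condition `γ'^p = γ'` (i.e. `γ'` lies in the prime subfield, so that
`C' = C · A₀(m) · A₁(n)` can be further extended to an upper triangular matrix) is
equivalent to the polynomial equation `q₃·m²·n + q₂·m·n + q₁·n + q₀ = 0`. -/
theorem gamma_prime_in_prime_subfield_iff (p : ℕ) [Fact p.Prime]
    (K : Type*) [Field K] [CharP K p] (α β : K) (hα : α ≠ 0) (hβ : β ≠ 0)
    (hab : (α * β) ^ (p - 1) ≠ 1)
    (C C' : Matrix (Fin 2) (Fin 2) K) (hc : C 1 0 ≠ 0)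
    (m n : K) (hm : m ^ p = m) (hn : n ^ p = n)
    (hC' : C' = C * !![1, m * α; 0, 1] * !![1, 0; n * β, 1])
    (hc' : C' 1 0 ≠ 0)
    (γ γ' : K)
    (hγ : γ = C 1 1 * ((C 1 1 * β) ^ (p - 1) - C 1 0 ^ (p - 1)) /
        (α * C 1 0 ^ p * (1 - (α * β) ^ (p - 1))))
    (hγ' : γ' = C' 1 1 * ((C' 1 1 * β) ^ (p - 1) - C' 1 0 ^ (p - 1)) /
        (α * C' 1 0 ^ p * (1 - (α * β) ^ (p - 1))))
    (q₀ q₁ q₂ q₃ : K)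
    (hq₃ : q₃ = C 1 0 ^ p ^ 2 * α * β * ((α * β) ^ (p ^ 2 - 1) - 1))
    (hq₂ : q₂ = C 1 0 ^ p ^ 2 * α * β * γ ^ p - C 1 0 ^ p ^ 2 * (α * β) ^ p ^ 2 * γ +
        (C 1 1 * β) ^ p ^ 2 - C 1 0 ^ (p ^ 2 - 1) * C 1 1 * β)
    (hq₁ : q₁ = C 1 0 ^ (p ^ 2 - 1) * C 1 1 * β * γ ^ p - (C 1 1 * β) ^ p ^ 2 * γ)
    (hq₀ : q₀ = C 1 0 ^ p ^ 2 * (γ ^ p - γ)) :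
    γ' ^ p = γ' ↔ q₃ * m ^ 2 * n + q₂ * m * n + q₁ * n + q₀ = 0 := by
  have hpp : p.Prime := Fact.out
  have hp0 : p ≠ 0 := hpp.ne_zero
  obtain ⟨q, hqp⟩ : ∃ q, p = q + 1 := ⟨p - 1, (Nat.succ_pred_eq_of_pos hpp.pos).symm⟩
  have hq1 : p - 1 = q := by omega
  set c := C 1 0 with hcdef
  set d := C 1 1 with hddef
  have hαβ : α * β ≠ 0 := mul_ne_zero hα hβ
  have h1ab : (1 : K) - (α * β) ^ (p - 1) ≠ 0 := sub_ne_zero.mpr (Ne.symm hab)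
  have hE : α * β - (α * β) ^ p ≠ 0 := by
    have h : α * β - (α * β) ^ p = α * β * (1 - (α * β) ^ (p - 1)) := by
      rw [hq1, hqp]; simp only [pow_succ]; ring
    rw [h]; exact mul_ne_zero hαβ h1ab
  have key : ∀ u v : K, u ≠ 0 →
      v * ((v * β) ^ (p - 1) - u ^ (p - 1)) / (α * u ^ p * (1 - (α * β) ^ (p - 1)))
        = (u * (v * β) ^ p - v * β * u ^ p) / (u * (u ^ p * (α * β - (α * β) ^ p))) := by
    intro u v hu
    have hden1 : α * u ^ p * (1 - (α * β) ^ (p - 1)) ≠ 0 :=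
      mul_ne_zero (mul_ne_zero hα (pow_ne_zero _ hu)) h1ab
    have hden2 : u * (u ^ p * (α * β - (α * β) ^ p)) ≠ 0 :=
      mul_ne_zero hu (mul_ne_zero (pow_ne_zero _ hu) hE)
    rw [div_eq_div_iff hden1 hden2, hq1, hqp]
    simp only [pow_succ]
    all_goals ring
  -- matrix entries
  have hc'v : C' 1 0 = c + n * β * (c * (m * α) + d) := by
    rw [hC']
    simp [Matrix.mul_apply, Fin.sum_univ_two]
    all_goals ring
  have hd'v : C' 1 1 = c * (m * α) + d := by
    rw [hC']
    simp [Matrix.mul_apply, Fin.sum_univ_two]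
    all_goals ring
  rw [hc'v] at hc'
  -- frobenius atoms
  obtain ⟨c1, d1, a1, b1, hc1, hd1, ha1, hb1⟩ :
      ∃ c1 d1 a1 b1 : K, c1 = c ^ p ∧ d1 = d ^ p ∧ a1 = α ^ p ∧ b1 = β ^ p :=
    ⟨_, _, _, _, rfl, rfl, rfl, rfl⟩
  obtain ⟨c2, d2, a2, b2, hc2, hd2, ha2, hb2⟩ :
      ∃ c2 d2 a2 b2 : K, c2 = c1 ^ p ∧ d2 = d1 ^ p ∧ a2 = a1 ^ p ∧ b2 = b1 ^ p :=
    ⟨_, _, _, _, rfl, rfl, rfl, rfl⟩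
  have frob_add : ∀ x y : K, (x + y) ^ p = x ^ p + y ^ p := fun x y => add_pow_char x y p
  have frob_sub : ∀ x y : K, (x - y) ^ p = x ^ p - y ^ p := fun x y => sub_pow_char x y
  -- nonzero facts
  have hc1ne : c1 ≠ 0 := by rw [hc1]; exact pow_ne_zero _ hc
  have hc2ne : c2 ≠ 0 := by rw [hc2]; exact pow_ne_zero _ hc1ne
  have hEa : α * β - a1 * b1 ≠ 0 := by
    rwa [ha1, hb1, ← mul_pow]
  have hE1a : a1 * b1 - a2 * b2 ≠ 0 := by
    have h : (α * β - (α * β) ^ p) ^ p = a1 * b1 - a2 * b2 := by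
      simp only [frob_sub, mul_pow, ← hc1, ← hd1, ← ha1, ← hb1, ← hc2, ← hd2, ← ha2, ← hb2]
    rw [← h]; exact pow_ne_zero _ hE
  have hu1e : (c + n * β * (c * (m * α) + d)) ^ p = (c1 + n*b1*(c1*(m*a1)+d1)) := by
    simp only [frob_add, mul_pow, hm, hn, ← hc1, ← hd1, ← ha1, ← hb1]
  have hu2e : ((c1 + n*b1*(c1*(m*a1)+d1)) : K) ^ p = (c2 + n*b2*(c2*(m*a2)+d2)) := by
    simp only [frob_add, mul_pow, hm, hn, ← hc2, ← hd2, ← ha2, ← hb2]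
  have hu1ne : ((c1 + n*b1*(c1*(m*a1)+d1)) : K) ≠ 0 := by rw [← hu1e]; exact pow_ne_zero _ hc'
  have hu2ne : ((c2 + n*b2*(c2*(m*a2)+d2)) : K) ≠ 0 := by rw [← hu2e]; exact pow_ne_zero _ hu1ne
  -- pow p^2 facts
  have hpsq : (1:ℕ) ≤ p ^ 2 := Nat.one_le_iff_ne_zero.mpr (pow_ne_zero 2 hp0)
  have H4 : c ^ p ^ 2 = c2 := by
    rw [hc2, hc1, ← pow_mul, ← pow_two]
  have H5 : (α * β) ^ p ^ 2 = a2 * b2 := by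
    rw [ha2, hb2, ha1, hb1, mul_pow, ← pow_mul, ← pow_mul, ← pow_two]
  have H3 : (d * β) ^ p ^ 2 = d2 * b2 := by
    rw [hd2, hb2, hd1, hb1, mul_pow, ← pow_mul, ← pow_mul, ← pow_two]
  have H1 : c ^ (p ^ 2 - 1) * c = c2 := by
    rw [← pow_succ, Nat.sub_add_cancel hpsq, H4]
  have H2 : (α * β) ^ (p ^ 2 - 1) * (α * β) = a2 * b2 := by
    rw [← pow_succ, Nat.sub_add_cancel hpsq, H5]
  -- gamma relations
  have hγX : γ * (c * (c1 * (α * β - a1 * b1))) = c * (d1 * b1) - d * β * c1 := by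
    rw [hγ, key c d hc, div_mul_eq_mul_div, div_eq_iff
      (mul_ne_zero hc (mul_ne_zero (pow_ne_zero _ hc) hE))]
    simp only [frob_add, frob_sub, mul_pow, hm, hn, ← hc1, ← hd1, ← ha1, ← hb1]
    all_goals ring
  have hγpX : γ ^ p * (c1 * (c2 * (a1 * b1 - a2 * b2))) = c1 * (d2 * b2) - d1 * b1 * c2 := by
    have h := congrArg (fun x : K => x ^ p) hγX
    simp only [mul_pow, frob_add, frob_sub, hm, hn,
      ← hc1, ← hd1, ← ha1, ← hb1, ← hc2, ← hd2, ← ha2, ← hb2] at h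
    linear_combination h
  -- gamma' relations
  have hγ'X : γ' * ((c + n*β*(c*(m*α)+d))*((c1 + n*b1*(c1*(m*a1)+d1))*(α*β - a1*b1))) = ((c + n*β*(c*(m*α)+d))*((c1*(m*a1)+d1)*b1) - (c*(m*α)+d)*β*(c1 + n*b1*(c1*(m*a1)+d1))) := by
    rw [hγ', key (C' 1 0) (C' 1 1) (by rw [hc'v]; exact hc'), hc'v, hd'v,
      div_mul_eq_mul_div, div_eq_iff
      (mul_ne_zero hc' (mul_ne_zero (pow_ne_zero _ hc') hE))]
    simp only [frob_add, frob_sub, mul_pow, hm, hn, ← hc1, ← hd1, ← ha1, ← hb1]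
    all_goals ring
  have hγ'pX : γ' ^ p * ((c1 + n*b1*(c1*(m*a1)+d1))*((c2 + n*b2*(c2*(m*a2)+d2))*(a1*b1 - a2*b2))) = ((c1 + n*b1*(c1*(m*a1)+d1))*((c2*(m*a2)+d2)*b2) - (c1*(m*a1)+d1)*b1*(c2 + n*b2*(c2*(m*a2)+d2))) := by
    have h := congrArg (fun x : K => x ^ p) hγ'X
    simp only [mul_pow, frob_add, frob_sub, hm, hn,
      ← hc1, ← hd1, ← ha1, ← hb1, ← hc2, ← hd2, ← ha2, ← hb2] at h
    linear_combination h
  have hDne : (((c + n*β*(c*(m*α)+d))*((c1 + n*b1*(c1*(m*a1)+d1))*(α*β - a1*b1))) : K) ≠ 0 := mul_ne_zero hc' (mul_ne_zero hu1ne hEa)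
  have hDpne : (((c1 + n*b1*(c1*(m*a1)+d1))*((c2 + n*b2*(c2*(m*a2)+d2))*(a1*b1 - a2*b2))) : K) ≠ 0 := mul_ne_zero hu1ne (mul_ne_zero hu2ne hE1a)
  have hiff1 : γ' ^ p = γ' ↔ ((c1 + n*b1*(c1*(m*a1)+d1))*((c2*(m*a2)+d2)*b2) - (c1*(m*a1)+d1)*b1*(c2 + n*b2*(c2*(m*a2)+d2))) * ((c + n*β*(c*(m*α)+d))*((c1 + n*b1*(c1*(m*a1)+d1))*(α*β - a1*b1))) = ((c + n*β*(c*(m*α)+d))*((c1*(m*a1)+d1)*b1) - (c*(m*α)+d)*β*(c1 + n*b1*(c1*(m*a1)+d1))) * ((c1 + n*b1*(c1*(m*a1)+d1))*((c2 + n*b2*(c2*(m*a2)+d2))*(a1*b1 - a2*b2))) := by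
    constructor
    · intro h
      rw [← hγ'pX, ← hγ'X, h]
      ring
    · intro h
      have h3 : γ' ^ p * (((c1 + n*b1*(c1*(m*a1)+d1))*((c2 + n*b2*(c2*(m*a2)+d2))*(a1*b1 - a2*b2))) * ((c + n*β*(c*(m*α)+d))*((c1 + n*b1*(c1*(m*a1)+d1))*(α*β - a1*b1)))) = γ' * (((c1 + n*b1*(c1*(m*a1)+d1))*((c2 + n*b2*(c2*(m*a2)+d2))*(a1*b1 - a2*b2))) * ((c + n*β*(c*(m*α)+d))*((c1 + n*b1*(c1*(m*a1)+d1))*(α*β - a1*b1)))) := by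
        linear_combination ((c + n*β*(c*(m*α)+d))*((c1 + n*b1*(c1*(m*a1)+d1))*(α*β - a1*b1))) * hγ'pX - ((c1 + n*b1*(c1*(m*a1)+d1))*((c2 + n*b2*(c2*(m*a2)+d2))*(a1*b1 - a2*b2))) * hγ'X + h
      exact mul_right_cancel₀ (mul_ne_zero hDpne hDne) h3
  have hiff2 : ((c1 + n*b1*(c1*(m*a1)+d1))*((c2*(m*a2)+d2)*b2) - (c1*(m*a1)+d1)*b1*(c2 + n*b2*(c2*(m*a2)+d2))) * ((c + n*β*(c*(m*α)+d))*((c1 + n*b1*(c1*(m*a1)+d1))*(α*β - a1*b1))) - ((c + n*β*(c*(m*α)+d))*((c1*(m*a1)+d1)*b1) - (c*(m*α)+d)*β*(c1 + n*b1*(c1*(m*a1)+d1))) * ((c1 + n*b1*(c1*(m*a1)+d1))*((c2 + n*b2*(c2*(m*a2)+d2))*(a1*b1 - a2*b2)))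
      = (q₃ * m ^ 2 * n + q₂ * m * n + q₁ * n + q₀) * (c*(c1*((α*β - a1*b1)*((a1*b1 - a2*b2)*(c1 + n*b1*(c1*(m*a1)+d1)))))) := by
    rw [hq₀, hq₁, hq₂, hq₃, H3, H4, H5]
    linear_combination ((c2*(a2*b2)*(m*n) + d2*b2*n + c2)*((a1*b1 - a2*b2)*(c1 + n*b1*(c1*(m*a1)+d1)))) * hγX - ((α*β*c*(m*n) + d*β*n + c)*((α*β - a1*b1)*(c1 + n*b1*(c1*(m*a1)+d1)))) * hγpX - ((d*β*(γ^p)*n - d*β*(m*n))*(c1*((α*β - a1*b1)*((a1*b1 - a2*b2)*(c1 + n*b1*(c1*(m*a1)+d1)))))) * H1 - (c2*(m^2*n)*(c*(c1*((α*β - a1*b1)*((a1*b1 - a2*b2)*(c1 + n*b1*(c1*(m*a1)+d1))))))) * H2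
  have hUne : ((c*(c1*((α*β - a1*b1)*((a1*b1 - a2*b2)*(c1 + n*b1*(c1*(m*a1)+d1)))))) : K) ≠ 0 :=
    mul_ne_zero hc (mul_ne_zero hc1ne (mul_ne_zero hEa (mul_ne_zero hE1a hu1ne)))
  rw [hiff1, ← sub_eq_zero, hiff2]
  constructor
  · intro h
    rcases mul_eq_zero.mp h with h | h
    · exact h
    · exact absurd h hUne
  · intro h
    rw [h, zero_mul]
end

section
/- Let R be a commutative ring and a ∈ R, and let f_a be the sequence with f_a(0) = 0, f_a(1) = 1, f_a(n+2) = a·f_a(n+1) + f_a(n). Then for every natural number n ≥ 1, 2^{n−1} · f_a(n) = Σ_{k odd, 1 ≤ k ≤ n} binom(n, k) · a^{n−k} · (a² + 4)^{(k−1)/2}, where the sum ranges over odd k between 1 and n. (This gives a closed binomial formula for f_a(n), and hence for arbitrary powers of the generalized Tillich–Zémor generators, in any characteristic.) -/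
/-- The sequence `f_a` with `f_a(0) = 0`, `f_a(1) = 1`, `f_a(n+2) = a·f_a(n+1) + f_a(n)`,
governing the powers of the Tillich–Zémor generator `Y_a = !![a, 1; 1, 0]`. -/
def tzSeq {R : Type*} [CommRing R] (a : R) : ℕ → R
  | 0 => 0
  | 1 => 1
  | n + 2 => a * tzSeq a (n + 1) + tzSeq a n

/-!
Binet's formula without dividing by 2: in `R[ω]` with `ω² = a² + 4` one has
`(a + ω)^(n+1) = 2^n (L + f_a(n+1) ω)` with `L = f_a(n+2) + f_a(n)`, as `(a + ω)/2` would be a root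
of `X² - aX - 1`. Expanding `(a + ω)^(n+1)` by the binomial theorem instead, only the odd powers of
`ω` contribute to the `ω`-coordinate, and comparing the two gives the formula.
-/

open Finset QuadraticAlgebra

namespace QuadraticAlgebra

variable {R : Type*} [CommRing R] {d : R}

theorem omega_pow_two_mul (m : ℕ) : (ω : QuadraticAlgebra R d 0) ^ (2 * m) = ⟨d ^ m, 0⟩ := by
  rw [pow_mul, sq, omega_mul_omega_eq_mk]
  exact (C_pow m d).symm

theorem im_omega_pow (k : ℕ) :
    ((ω : QuadraticAlgebra R d 0) ^ k).im = if Odd k then d ^ ((k - 1) / 2) else 0 := by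
  rcases Nat.even_or_odd' k with ⟨m, rfl | rfl⟩
  · simp [omega_pow_two_mul]
  · simp [pow_succ, omega_pow_two_mul]

theorem im_C_add_omega_pow (x : R) (n : ℕ) :
    ((.C x + ω : QuadraticAlgebra R d 0) ^ n).im =
      ∑ k ∈ (range (n + 1)).filter Odd, (n.choose k : R) * x ^ (n - k) * d ^ ((k - 1) / 2) := by
  rw [add_comm, add_pow, ← imₗ_apply, map_sum, sum_filter]
  refine sum_congr rfl fun k _ => ?_
  rw [imₗ_apply, ← C_pow, ← C_natCast, mul_assoc, ← C_mul, mul_C_eq_smul, im_smul, im_omega_pow,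
    smul_eq_mul]
  split_ifs <;> ring

end QuadraticAlgebra

theorem tzSeq_add_two {R : Type*} [CommRing R] (a : R) (n : ℕ) :
    tzSeq a (n + 2) = a * tzSeq a (n + 1) + tzSeq a n := rfl

theorem C_add_omega_pow_succ_eq_tzSeq {R : Type*} [CommRing R] (a : R) (n : ℕ) :
    (.C a + ω : QuadraticAlgebra R (a ^ 2 + 4) 0) ^ (n + 1) =
      ⟨2 ^ n * (tzSeq a (n + 2) + tzSeq a n), 2 ^ n * tzSeq a (n + 1)⟩ := by
  induction n with
  | zero => ext <;> simp [tzSeq]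
  | succ n ih =>
    rw [pow_succ _ (n + 1), ih]
    ext <;>
      simp only [re_mul, im_mul, re_add, im_add, re_C, im_C, omega_re, omega_im, tzSeq_add_two] <;>
      ring

/-- Binomial closed formula, valid in any commutative ring: for `n ≥ 1`,
`2^(n-1)·f_a(n) = ∑_{k odd, 1 ≤ k ≤ n} C(n,k)·a^(n-k)·(a²+4)^((k-1)/2)`. -/
theorem tzSeq_binomial_formula {R : Type*} [CommRing R] (a : R) (n : ℕ) (hn : 1 ≤ n) :
    (2 : R) ^ (n - 1) * tzSeq a n =
      ∑ k ∈ Finset.filter (fun k => Odd k) (Finset.range (n + 1)),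
        (n.choose k : R) * a ^ (n - k) * (a ^ 2 + 4) ^ ((k - 1) / 2) := by
  obtain ⟨m, rfl⟩ := Nat.exists_eq_add_of_le' hn
  rw [Nat.add_sub_cancel, ← im_C_add_omega_pow, C_add_omega_pow_succ_eq_tzSeq]
end

section
/- Let K be a finite field with q elements and let a ∈ K. Set N := q·(q−1)·(q+1) (which equals (q² − q)(q² − 1)/(q − 1)). Then the matrix Y_a = [[a, 1],[1, 0]] over K satisfies Y_a^N = 1 (the identity matrix), and consequently the sequence f_a is periodic with period dividing N: f_a(n + N) = f_a(n) for all natural numbers n. -/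
open Polynomial

namespace Polynomial

variable {K : Type*} [Field K] [Fintype K]

theorem dvd_sq_X_pow_card_sq_sub_X {f : K[X]} (hf : f.natDegree = 2) :
    f ∣ (X ^ Fintype.card K ^ 2 - X) ^ 2 := by
  have factor_dvd {g : K[X]} (hg : Irreducible g) (hdeg : g.natDegree ∣ 2) :
      g ∣ X ^ Fintype.card K ^ 2 - X := by
    rw [← Nat.card_eq_fintype_card]
    exact hg.natDegree_dvd_iff_dvd_X_pow_card_pow_sub_X.mp hdeg
  by_cases hirr : Irreducible f
  · exact (factor_dvd hirr (hf ▸ dvd_rfl)).trans (dvd_pow_self _ two_ne_zero)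
  have hf0 : f ≠ 0 := by rintro rfl; simp at hf
  obtain ⟨g, h, rfl, hg, hh⟩ : ∃ g h, f = g * h ∧ ¬IsUnit g ∧ ¬IsUnit h := by
    simpa [irreducible_iff, not_isUnit_of_natDegree_pos f (by omega)] using hirr
  have hg0 : g ≠ 0 := left_ne_zero_of_mul hf0
  have hh0 : h ≠ 0 := right_ne_zero_of_mul hf0
  have hg1 := natDegree_pos_iff_degree_pos.mpr (degree_pos_of_ne_zero_of_nonunit hg0 hg)
  have hh1 := natDegree_pos_iff_degree_pos.mpr (degree_pos_of_ne_zero_of_nonunit hh0 hh)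
  rw [natDegree_mul hg0 hh0] at hf
  have linear_dvd {l : K[X]} (hl : l.natDegree = 1) : l ∣ X ^ Fintype.card K ^ 2 - X :=
    factor_dvd (irreducible_of_degree_eq_one ((degree_eq_iff_natDegree_eq_of_pos one_pos).mpr hl))
      (hl ▸ one_dvd 2)
  rw [sq]
  exact mul_dvd_mul (linear_dvd (by omega)) (linear_dvd (by omega))

theorem dvd_X_pow_card_cube_sub_X_pow_card {f : K[X]} (hf : f.natDegree = 2) :
    f ∣ X ^ Fintype.card K ^ 3 - X ^ Fintype.card K := by
  have hq : 2 ≤ Fintype.card K := Fintype.one_lt_card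
  have frob : (X ^ Fintype.card K ^ 2 - X : K[X]) ^ Fintype.card K =
      X ^ Fintype.card K ^ 3 - X ^ Fintype.card K := by
    rw [← FiniteField.expand_card]
    simp only [map_sub, map_pow, expand_X, ← pow_mul]
    ring_nf
  exact frob ▸ (dvd_sq_X_pow_card_sq_sub_X hf).trans (pow_dvd_pow _ hq)

end Polynomial

namespace Matrix

variable {K : Type*} [Field K] [Fintype K]

theorem pow_card_cube_eq_pow_card (M : Matrix (Fin 2) (Fin 2) K) :
    M ^ Fintype.card K ^ 3 = M ^ Fintype.card K := by
  obtain ⟨g, hg⟩ := dvd_X_pow_card_cube_sub_X_pow_card (by simp : M.charpoly.natDegree = 2)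
  have := congrArg (aeval M) hg
  rw [map_mul, aeval_self_charpoly, zero_mul, map_sub, map_pow, map_pow, aeval_X] at this
  exact sub_eq_zero.mp this

theorem pow_card_mul_card_sub_one_mul_card_add_one_eq_one {M : Matrix (Fin 2) (Fin 2) K}
    (hM : IsUnit M) :
    M ^ (Fintype.card K * (Fintype.card K - 1) * (Fintype.card K + 1)) = 1 := by
  have hexp : ∀ q : ℕ, q * (q - 1) * (q + 1) + q = q ^ 3
    | 0 => rfl
    | r + 1 => by simp only [Nat.add_sub_cancel]; ring
  have := M.pow_card_cube_eq_pow_card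
  rw [← hexp, pow_add] at this
  exact (hM.pow _).mul_eq_right.mp this

end Matrix

section TillichZemor

variable {R : Type*} [CommRing R] (a : R)

theorem tz_generator_pow_succ (n : ℕ) :
    (!![a, 1; 1, 0] : Matrix (Fin 2) (Fin 2) R) ^ (n + 1) =
      !![tzSeq a (n + 2), tzSeq a (n + 1); tzSeq a (n + 1), tzSeq a n] := by
  induction n with
  | zero => simp [tzSeq]
  | succ n ih =>
    rw [pow_succ, ih, Matrix.mul_fin_two]
    simp only [tzSeq, mul_one, mul_zero, add_zero, mul_comm a]

theorem tzSeq_eq_tz_generator_pow_succ_apply (n : ℕ) :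
    tzSeq a n = ((!![a, 1; 1, 0] : Matrix (Fin 2) (Fin 2) R) ^ (n + 1)) 1 1 := by
  simp [tz_generator_pow_succ]

theorem tzSeq_add_of_tz_generator_pow_eq_one {N : ℕ}
    (hN : (!![a, 1; 1, 0] : Matrix (Fin 2) (Fin 2) R) ^ N = 1) (n : ℕ) :
    tzSeq a (n + N) = tzSeq a n := by
  rw [tzSeq_eq_tz_generator_pow_succ_apply, tzSeq_eq_tz_generator_pow_succ_apply, add_right_comm,
    pow_add, hN, mul_one]

theorem isUnit_tz_generator : IsUnit (!![a, 1; 1, 0] : Matrix (Fin 2) (Fin 2) R) := by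
  simp [Matrix.isUnit_iff_isUnit_det, Matrix.det_fin_two_of]

end TillichZemor

/-- Over a finite field with `q` elements, `Y_a^(q·(q-1)·(q+1)) = 1`, and
hence the sequence `f_a` is periodic with period dividing `N = q·(q-1)·(q+1)`. -/
theorem tz_generator_periodic {K : Type*} [Field K] [Fintype K] (a : K) :
    (!![a, 1; 1, 0] : Matrix (Fin 2) (Fin 2) K) ^
        (Fintype.card K * (Fintype.card K - 1) * (Fintype.card K + 1)) = 1 ∧
    ∀ n : ℕ,
      tzSeq a (n + Fintype.card K * (Fintype.card K - 1) * (Fintype.card K + 1)) =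
        tzSeq a n :=
  have hY := Matrix.pow_card_mul_card_sub_one_mul_card_add_one_eq_one (isUnit_tz_generator a)
  ⟨hY, tzSeq_add_of_tz_generator_pow_eq_one a hY⟩
end
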